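/- arXiv:2007.09803 — 7 statements merged into one kernel-verified Lean document; each statement's English description precedes it below -/
import Mathlib

section
/- Let a : ℕ → ℤ satisfy a(p) ≡ p+1 (mod ℓ) for a prime p and a prime ℓ ∈ {3,5}, and a(p^m) = a(p)·a(p^{m−1}) − p·a(p^{m−2}). If d is odd, ℓ_1 is an odd prime with ℓ_1 ≡ −1 (mod ℓ), and a(p^{d−1}) = ℓ_1, then p ≡ 1 (mod ℓ) and d ≡ −1 (mod ℓ). -/
/-! Reducing the recurrence modulo `ℓ`, where `a p ≡ p + 1`, the characteristic polynomial
`X² - (p + 1) X + p = (X - 1)(X - p)` shows `a (p ^ m) ≡ 1 + p + ⋯ + p ^ m`. So the hypotheses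
say `1 + q + ⋯ + q ^ (d - 1) = -1` in `ZMod ℓ` with `q = p mod ℓ`. For `q ≠ 1` this is
`q ^ d = 2 - q`; but every nonzero `q` has `q ² = ± 1` when `ℓ - 1 ∣ 4`, so for odd `d` we get
`q ^ d = ± q`, which is incompatible with `q ^ d = 2 - q` as `2` is invertible. Hence `q = 1`, and
then the sum is `d`. -/

open Finset

lemma eq_geom_sum_of_linearRecurrence {R : Type*} [CommRing R] (u : ℕ → R) (q : R)
    (h0 : u 0 = 1) (h1 : u 1 = q + 1)
    (hrec : ∀ n, u (n + 2) = (q + 1) * u (n + 1) - q * u n) (n : ℕ) :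
    u n = ∑ i ∈ range (n + 1), q ^ i := by
  induction n using Nat.twoStepInduction with
  | zero => simp [h0]
  | one => simp [sum_range_succ, h1, add_comm]
  | more n ih₀ ih₁ =>
    rw [hrec, ih₀, ih₁, sum_range_succ _ (n + 2), sum_range_succ _ (n + 1)]
    ring

namespace ZMod

variable {ℓ : ℕ} [Fact ℓ.Prime]

lemma sq_eq_one_or_neg_one (h4 : ℓ - 1 ∣ 4) {q : ZMod ℓ} (hq : q ≠ 0) :
    q ^ 2 = 1 ∨ q ^ 2 = -1 := by
  obtain ⟨k, hk⟩ := h4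
  have : (q ^ 2) ^ 2 = 1 := by
    rw [← pow_mul, show 2 * 2 = 4 from rfl, hk, pow_mul, pow_card_sub_one_eq_one hq, one_pow]
  exact sq_eq_one_iff.mp this

lemma pow_odd_eq_self_or_neg (h4 : ℓ - 1 ∣ 4) {q : ZMod ℓ} (hq : q ≠ 0) {d : ℕ} (hd : Odd d) :
    q ^ d = q ∨ q ^ d = -q := by
  obtain ⟨k, rfl⟩ := hd
  rw [pow_succ, pow_mul]
  rcases sq_eq_one_or_neg_one h4 hq with h | h
  · simp [h]
  · rcases Nat.even_or_odd k with hk | hk <;> simp [h, hk.neg_one_pow]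

lemma eq_one_of_geom_sum_eq_neg_one (hℓ2 : ℓ ≠ 2) (h4 : ℓ - 1 ∣ 4) {q : ZMod ℓ} {d : ℕ}
    (hd : Odd d) (hsum : ∑ i ∈ range d, q ^ i = -1) : q = 1 := by
  by_contra hq1
  have htwo : (2 : ZMod ℓ) ≠ 0 := Ring.two_ne_zero (by rwa [ringChar_zmod_n])
  have hpow : q ^ d = 2 - q := by linear_combination (q - 1) * hsum - geom_sum_mul q d
  by_cases hq0 : q = 0
  · rw [hq0, zero_pow hd.pos.ne', sub_zero] at hpow
    exact htwo hpow.symm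
  rcases pow_odd_eq_self_or_neg h4 hq0 hd with h | h <;> rw [hpow] at h
  · exact hq1 ((mul_right_inj' htwo).mp (by linear_combination -h))
  · exact htwo (by linear_combination h)

end ZMod

theorem stmt_3_general (a : ℕ → ℤ) (p ℓ : ℕ) (hℓ : ℓ = 3 ∨ ℓ = 5)
    (h1 : a 1 = 1)
    (hap : a p ≡ (p : ℤ) + 1 [ZMOD ℓ])
    (hrec : ∀ m : ℕ, 2 ≤ m → a (p ^ m) = a p * a (p ^ (m - 1)) - (p : ℤ) * a (p ^ (m - 2)))
    (d : ℕ) (hd : Odd d) (ℓ₁ : ℕ)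
    (hℓ₁mod : (ℓ₁ : ℤ) ≡ -1 [ZMOD ℓ])
    (hval : a (p ^ (d - 1)) = (ℓ₁ : ℤ)) :
    (p : ℤ) ≡ 1 [ZMOD ℓ] ∧ (d : ℤ) ≡ -1 [ZMOD ℓ] := by
  have : Fact ℓ.Prime := ⟨by rcases hℓ with rfl | rfl <;> norm_num⟩
  simp only [← ZMod.intCast_eq_intCast_iff, Int.cast_natCast, Int.cast_add, Int.cast_one,
    Int.cast_neg] at hap hℓ₁mod ⊢
  have hgeom := eq_geom_sum_of_linearRecurrence (fun m ↦ (a (p ^ m) : ZMod ℓ)) (p : ZMod ℓ)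
    (by simp [h1]) (by simpa using hap) (fun n ↦ by simp [hrec (n + 2) le_add_self, hap])
  have hsum : ∑ i ∈ range d, (p : ZMod ℓ) ^ i = -1 := by
    simpa [hval, hℓ₁mod, Nat.sub_add_cancel hd.pos] using (hgeom (d - 1)).symm
  have hp1 := ZMod.eq_one_of_geom_sum_eq_neg_one (by omega) (by rcases hℓ with rfl | rfl <;> decide)
    hd hsum
  exact ⟨hp1, by simpa [hp1] using hsum⟩

/-- Let `a : ℕ → ℤ` satisfy `a p ≡ p + 1 (mod ℓ)` for a prime `p` and a prime
`ℓ ∈ {3, 5}`, with `a 1 = 1` and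
`a (p^m) = a p · a (p^(m-1)) - p · a (p^(m-2))` for `m ≥ 2`.  If `d` is odd,
`ℓ₁` is an odd prime with `ℓ₁ ≡ -1 (mod ℓ)`, and `a (p^(d-1)) = ℓ₁`, then
`p ≡ 1 (mod ℓ)` and `d ≡ -1 (mod ℓ)`. -/
theorem stmt_3 (a : ℕ → ℤ) (p ℓ : ℕ) (hp : p.Prime) (hℓ : ℓ = 3 ∨ ℓ = 5)
    (h1 : a 1 = 1)
    (hap : a p ≡ (p : ℤ) + 1 [ZMOD ℓ])
    (hrec : ∀ m : ℕ, 2 ≤ m → a (p ^ m) = a p * a (p ^ (m - 1)) - (p : ℤ) * a (p ^ (m - 2)))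
    (d : ℕ) (hd : Odd d) (ℓ₁ : ℕ) (hℓ₁ : ℓ₁.Prime) (hℓ₁odd : Odd ℓ₁)
    (hℓ₁mod : (ℓ₁ : ℤ) ≡ -1 [ZMOD ℓ])
    (hval : a (p ^ (d - 1)) = (ℓ₁ : ℤ)) :
    (p : ℤ) ≡ 1 [ZMOD ℓ] ∧ (d : ℤ) ≡ -1 [ZMOD ℓ] :=
  stmt_3_general a p ℓ hℓ h1 hap hrec d hd ℓ₁ hℓ₁mod hval
end

section
/- The only integer solutions (x, y) of y^4 − 3x^2y^2 + x^4 = 5 are (x, y) ∈ {(1, −2), (−1, −2), (2, −1), (−2, −1), (2, 1), (−2, 1), (1, 2), (−1, 2)}. -/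
/-!
Writing `u = y² - x²` and `v = xy`, the quartic form is `u² - v²`, so `(u - v)(u + v) = 5`.
As `5` is prime one factor is `±1` and the other `±5`, whence `2v = ±4`, i.e. `xy = ±2`;
the only integer pairs with `xy = ±2` are the eight listed points.
-/

theorem Int.sq_two_mul_eq_of_sq_sub_sq_eq_prime {p u v : ℤ} (hp : Prime p)
    (h : u ^ 2 - v ^ 2 = p) : (2 * v) ^ 2 = (p - 1) ^ 2 := by
  have hfac : (u - v) * (u + v) = p := by linear_combination h
  rcases hp.irreducible.isUnit_or_isUnit hfac.symm with hunit | hunit <;>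
    rcases Int.isUnit_iff.mp hunit with hε | hε <;>
    rw [hε] at hfac
  · linear_combination (2 * v + p - 1) * (hfac - hε)
  · linear_combination (2 * v - p + 1) * (-hfac - hε)
  · linear_combination (2 * v - p + 1) * (hε - hfac)
  · linear_combination (2 * v + p - 1) * (hε + hfac)

theorem mem_of_mul_sq_eq_four {x y : ℤ} (h : (x * y) ^ 2 = 4) :
    (x, y) ∈ ({(1, -2), (-1, -2), (2, -1), (-2, -1),
               (2, 1), (-2, 1), (1, 2), (-1, 2)} : Set (ℤ × ℤ)) := by
  rw [mul_pow] at h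
  have hx : x ^ 2 ≤ 2 ^ 2 := Int.le_of_dvd (by norm_num) ⟨y ^ 2, h.symm⟩
  have hy : y ^ 2 ≤ 2 ^ 2 := Int.le_of_dvd (by norm_num) ⟨x ^ 2, by linarith⟩
  obtain ⟨hx₁, hx₂⟩ := abs_le_of_sq_le_sq' hx (by norm_num)
  obtain ⟨hy₁, hy₂⟩ := abs_le_of_sq_le_sq' hy (by norm_num)
  interval_cases x <;> interval_cases y <;> simp_all

/-- The only integer solutions `(x, y)` of `y⁴ - 3x²y² + x⁴ = 5` are
`(±1, ±2)` and `(±2, ±1)` (all sign combinations). -/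
theorem stmt_7 (x y : ℤ) :
    y ^ 4 - 3 * x ^ 2 * y ^ 2 + x ^ 4 = 5 ↔
      (x, y) ∈ ({(1, -2), (-1, -2), (2, -1), (-2, -1),
                 (2, 1), (-2, 1), (1, 2), (-1, 2)} : Set (ℤ × ℤ)) := by
  refine ⟨fun h => mem_of_mul_sq_eq_four ?_, fun h => ?_⟩
  · have hv := Int.sq_two_mul_eq_of_sq_sub_sq_eq_prime (p := 5) (u := y ^ 2 - x ^ 2) (v := x * y)
      (Int.prime_iff_natAbs_prime.mpr (by norm_num)) (by linear_combination h)
    linarith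
  · simp only [Set.mem_insert_iff, Set.mem_singleton_iff, Prod.mk.injEq] at h
    rcases h with ⟨rfl, rfl⟩ | ⟨rfl, rfl⟩ | ⟨rfl, rfl⟩ | ⟨rfl, rfl⟩ | ⟨rfl, rfl⟩ | ⟨rfl, rfl⟩ |
      ⟨rfl, rfl⟩ | ⟨rfl, rfl⟩ <;> norm_num
end

section
/- The equation y^4 − 3x^2y^2 + x^4 = ℓ has no integer solutions for ℓ ∈ {11, 19, 29, 41, 59, 61, 71, 79, 89}. -/
/-!
Over `ℤ` the quartic factors as `a * b` with `a = y² - xy - x²` and `b = y² + xy - x²`. Since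
`a + b = 2(y² - x²)` and `b - a = 2xy`, the Pythagorean identity `(y² - x²)² + (2xy)² = (x² + y²)²`
gives `(a + b)² + 4(a - b)² = (2(x² + y²))²`. If `a * b` is a prime `ℓ`, then `{a, b} = {±1, ±ℓ}`,
so `5ℓ² - 6ℓ + 5 = (ℓ + 1)² + 4(ℓ - 1)²` is a perfect square, which fails for the listed primes.
-/

lemma Int.sq_add_eq_and_sq_sub_eq_of_mul_eq_prime {a b p : ℤ} (hp : Prime p) (h : a * b = p) :
    (a + b) ^ 2 = (p + 1) ^ 2 ∧ (a - b) ^ 2 = (p - 1) ^ 2 := by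
  rcases hp.irreducible.isUnit_or_isUnit h.symm with ha | hb
  · rcases Int.isUnit_iff.mp ha with rfl | rfl
    · subst h; constructor <;> ring
    · obtain rfl : b = -p := by linarith
      constructor <;> ring
  · rcases Int.isUnit_iff.mp hb with rfl | rfl
    · subst h; constructor <;> ring
    · obtain rfl : a = -p := by linarith
      constructor <;> ring

lemma isSquare_of_quartic_eq_prime {ℓ : ℤ} (hℓ : Prime ℓ) {x y : ℤ}
    (h : y ^ 4 - 3 * x ^ 2 * y ^ 2 + x ^ 4 = ℓ) : IsSquare (5 * ℓ ^ 2 - 6 * ℓ + 5) := by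
  obtain ⟨hsum, hdiff⟩ := Int.sq_add_eq_and_sq_sub_eq_of_mul_eq_prime hℓ
    (a := y ^ 2 - x * y - x ^ 2) (b := y ^ 2 + x * y - x ^ 2) (by linear_combination h)
  exact ⟨2 * (x ^ 2 + y ^ 2), by linear_combination -hsum - 4 * hdiff⟩

/-- The equation `y⁴ - 3x²y² + x⁴ = ℓ` has no integer solutions for
`ℓ ∈ {11, 19, 29, 41, 59, 61, 71, 79, 89}`. -/
theorem stmt_8 (ℓ : ℤ) (hℓ : ℓ ∈ ({11, 19, 29, 41, 59, 61, 71, 79, 89} : Set ℤ)) :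
    ∀ x y : ℤ, y ^ 4 - 3 * x ^ 2 * y ^ 2 + x ^ 4 ≠ ℓ := by
  intro x y h
  have hprime_nonsquare : Prime ℓ ∧ ¬ IsSquare (5 * ℓ ^ 2 - 6 * ℓ + 5) := by
    rcases hℓ with rfl | rfl | rfl | rfl | rfl | rfl | rfl | rfl | rfl <;> norm_num
  exact hprime_nonsquare.2 (isSquare_of_quartic_eq_prime hprime_nonsquare.1 h)
end

section
/- The only integer solutions (x, y) of y^4 − 3x^2y^2 + x^4 = −11 are (x, y) with {|x|, |y|} = {2, 3}, namely (±2, ±3) and (±3, ±2) in all sign combinations. -/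
/-!
The quartic is `(y² - x²)² - (xy)²`, so a solution gives `(xy)² - (y² - x²)² = 11`. As `11` is
prime, a difference of two squares equal to it pins both squares down: `(xy)² = 36` and
`(y² - x²)² = 25`. Hence `x²` and `y²` have product `36` and sum `13`, i.e. they are `4` and `9`.
-/

theorem Int.sq_add_sq_of_mul_eq_prime {a b q : ℤ} (hq : Prime q) (h : a * b = q) :
    a ^ 2 + b ^ 2 = q ^ 2 + 1 := by
  have hunit_sq : (a ^ 2 - 1) * (b ^ 2 - 1) = 0 := by
    rcases hq.irreducible.isUnit_or_isUnit h.symm with ha | hb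
    · rw [Int.isUnit_sq ha, sub_self, zero_mul]
    · rw [Int.isUnit_sq hb, sub_self, mul_zero]
  linear_combination -hunit_sq + (a * b + q) * h

theorem Int.four_mul_sq_of_sq_sub_sq_eq_prime {p s q : ℤ} (hq : Prime q) (h : p ^ 2 - s ^ 2 = q) :
    4 * p ^ 2 = (q + 1) ^ 2 ∧ 4 * s ^ 2 = (q - 1) ^ 2 := by
  have hsum := Int.sq_add_sq_of_mul_eq_prime hq (a := p - s) (b := p + s) (by linear_combination h)
  exact ⟨by linear_combination hsum + 2 * h, by linear_combination hsum - 2 * h⟩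

theorem quartic_eq_neg_eleven_iff (x y : ℤ) :
    y ^ 4 - 3 * x ^ 2 * y ^ 2 + x ^ 4 = -11 ↔ x ^ 2 * y ^ 2 = 36 ∧ (y ^ 2 - x ^ 2) ^ 2 = 25 := by
  constructor
  · intro h
    have h11 : Prime (11 : ℤ) := Int.prime_iff_natAbs_prime.2 (by norm_num)
    obtain ⟨hp, hs⟩ := Int.four_mul_sq_of_sq_sub_sq_eq_prime h11 (p := x * y) (s := y ^ 2 - x ^ 2)
      (by linear_combination -h)
    constructor <;> linarith [mul_pow x y 2]
  · rintro ⟨hp, hs⟩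
    linear_combination hs - hp

theorem mul_eq_and_sq_sub_eq_iff {u v : ℤ} (hu : 0 ≤ u) (hv : 0 ≤ v) :
    u * v = 36 ∧ (v - u) ^ 2 = 25 ↔ (u = 4 ∧ v = 9) ∨ (u = 9 ∧ v = 4) := by
  constructor
  · rintro ⟨hp, hs⟩
    have hsum : u + v = 13 := by
      have hsq : (u + v) ^ 2 = 13 ^ 2 := by linear_combination hs + 4 * hp
      exact (pow_left_inj₀ (by positivity) (by norm_num) two_ne_zero).1 hsq
    have hroots : (u - 4) * (u - 9) = 0 := by linear_combination u * hsum - hp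
    rcases mul_eq_zero.1 hroots with h | h
    · left; constructor <;> linarith
    · right; constructor <;> linarith
  · rintro (⟨rfl, rfl⟩ | ⟨rfl, rfl⟩) <;> norm_num

/-- The only integer solutions `(x, y)` of `y⁴ - 3x²y² + x⁴ = -11` are those
with `{|x|, |y|} = {2, 3}`, namely `(±2, ±3)` and `(±3, ±2)` in all sign
combinations. -/
theorem stmt_9 (x y : ℤ) :
    y ^ 4 - 3 * x ^ 2 * y ^ 2 + x ^ 4 = -11 ↔
      ((|x| = 2 ∧ |y| = 3) ∨ (|x| = 3 ∧ |y| = 2)) := by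
  have abs_eq_iff (z : ℤ) {n : ℤ} (hn : 0 ≤ n) : |z| = n ↔ z ^ 2 = n ^ 2 := by
    rw [sq_eq_sq_iff_abs_eq_abs, abs_of_nonneg hn]
  rw [quartic_eq_neg_eleven_iff, mul_eq_and_sq_sub_eq_iff (sq_nonneg x) (sq_nonneg y)]
  simp only [abs_eq_iff x zero_le_two, abs_eq_iff x zero_le_three, abs_eq_iff y zero_le_two,
    abs_eq_iff y zero_le_three]
  norm_num
end

section
/- The equation y^4 − 3xy^2 + x^2 = −61 has no integer solutions. -/
/-!
Writing `u = 2x - 3y²` and `v = y²`, a solution gives `u² = 5v² - 244`. Multiplication by the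
norm-one unit `9 - 4√5` sends `u + v√5` to `(9u - 20v) + (9v - 4u)√5`, which maps solutions with
`v ≥ 16` to solutions with smaller `v ≥ 0` and the same `v mod 4`. The finitely many solutions
with `v < 16` all have `v ≡ 2, 3 (mod 4)`, so every solution does, whereas a square is `0` or `1`
mod `4`.
-/

lemma sq_sub_five_mul_sq_mul_unit (u v : ℤ) :
    (9 * u - 20 * v) ^ 2 - 5 * (9 * v - 4 * u) ^ 2 = u ^ 2 - 5 * v ^ 2 := by
  ring

lemma nonneg_and_lt_of_sq_eq_five_mul_sq_sub {u v : ℤ} (hu : 0 ≤ u)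
    (h : u ^ 2 = 5 * v ^ 2 - 244) (hv : 16 ≤ v) :
    0 ≤ 9 * v - 4 * u ∧ 9 * v - 4 * u < v := by
  constructor <;> nlinarith

lemma mod_four_of_sq_add_eq_of_lt :
    ∀ v < 16, ∀ u < 30, u ^ 2 + 244 = 5 * v ^ 2 → v % 4 = 2 ∨ v % 4 = 3 := by
  decide

lemma mod_four_of_sq_eq_five_mul_sq_sub (v : ℕ) (u : ℤ) (h : u ^ 2 = 5 * (v : ℤ) ^ 2 - 244) :
    v % 4 = 2 ∨ v % 4 = 3 := by
  induction v using Nat.strong_induction_on generalizing u with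
  | _ v ih =>
    rcases lt_or_ge v 16 with hv | hv
    · have hu : u.natAbs ^ 2 + 244 = 5 * v ^ 2 := by zify; rw [sq_abs]; linarith
      refine mod_four_of_sq_add_eq_of_lt v hv u.natAbs ?_ hu
      nlinarith
    · have h' : |u| ^ 2 = 5 * (v : ℤ) ^ 2 - 244 := by rwa [sq_abs]
      obtain ⟨hpos, hlt⟩ := nonneg_and_lt_of_sq_eq_five_mul_sq_sub (abs_nonneg u) h' (by exact_mod_cast hv)
      lift 9 * (v : ℤ) - 4 * |u| to ℕ using hpos with w hw
      have hw_sol : (9 * |u| - 20 * v) ^ 2 = 5 * (w : ℤ) ^ 2 - 244 := by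
        rw [hw]; linear_combination h' + sq_sub_five_mul_sq_mul_unit |u| v
      have := ih w (by exact_mod_cast hlt) _ hw_sol
      omega

lemma Nat.sq_mod_four_lt_two (n : ℕ) : n ^ 2 % 4 < 2 := by
  rw [Nat.pow_mod]
  have := Nat.mod_lt n (show 4 > 0 by norm_num)
  interval_cases n % 4 <;> decide

/-- The equation `y⁴ - 3xy² + x² = -61` has no integer solutions. -/
theorem stmt_13 : ∀ x y : ℤ, y ^ 4 - 3 * x * y ^ 2 + x ^ 2 ≠ -61 := by
  intro x y h
  have key : (2 * x - 3 * y ^ 2) ^ 2 = 5 * ((y.natAbs ^ 2 : ℕ) : ℤ) ^ 2 - 244 := by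
    push_cast; rw [sq_abs]; linear_combination 4 * h
  have := mod_four_of_sq_eq_five_mul_sq_sub _ _ key
  have := Nat.sq_mod_four_lt_two y.natAbs
  omega
end

section
/- The only integer solutions (x, y) of y^4 − 3xy^2 + x^2 = 11 are (x, y) ∈ {(−2, 1), (−2, −1), (5, 1), (5, −1)}. -/
/-!
Put `a = x - y²`, `b = x - 2y²`. Then `a - b = y²`, `a² - 3ab + b² = -11` and `ab = y⁴ + 11 > 0`,
so up to `(a, b) ↦ (-b, -a)` we may assume `1 ≤ b ≤ a`. Vieta jumping `(a, b) ↦ (b, 3b - a)`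
descends to `(4, 3)` or `(5, 3)`, so `a, b` are consecutive terms of `u_{n+2} = 3u_{n+1} - u_n`
started at `3, 4` or `3, 5`, and `a - b` is a term of the same recurrence started at `1, 5` or
`2, 7`. The second sequence is never a square mod 8, nor is the first at odd indices. At an
index `2tm` with `t = 2^k` and `m` odd, the first sequence is `≡ -1` modulo the companion term
`V_t` (`V = 2, 3, 7, 18, …`), which is `≡ 3 mod 4`, so it is not a square either (Cohn's
argument). Hence the index is `0`, and `(a, b) = (4, 3)`.
-/

def rec3 {R : Type*} [CommRing R] (u₀ u₁ : R) : ℕ → R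
  | 0 => u₀
  | 1 => u₁
  | n + 2 => 3 * rec3 u₀ u₁ (n + 1) - rec3 u₀ u₁ n

section rec3

variable {R S : Type*} [CommRing R] [CommRing S] (u₀ u₁ : R)

@[simp] lemma rec3_zero : rec3 u₀ u₁ 0 = u₀ := rfl

@[simp] lemma rec3_one : rec3 u₀ u₁ 1 = u₁ := rfl

lemma rec3_add_two (n : ℕ) : rec3 u₀ u₁ (n + 2) = 3 * rec3 u₀ u₁ (n + 1) - rec3 u₀ u₁ n := rfl

lemma eq_rec3 {f : ℕ → R} (hf : ∀ n, f (n + 2) = 3 * f (n + 1) - f n) :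
    f = rec3 (f 0) (f 1) := by
  funext n
  induction n using Nat.twoStepInduction with
  | zero => rfl
  | one => rfl
  | more n ih₀ ih₁ => rw [hf, ih₀, ih₁, rec3_add_two]

lemma map_rec3 (φ : R →+* S) (n : ℕ) : φ (rec3 u₀ u₁ n) = rec3 (φ u₀) (φ u₁) n := by
  have := eq_rec3 (f := fun n => φ (rec3 u₀ u₁ n)) fun n => by
    simp only [rec3_add_two, map_sub, map_mul, map_ofNat]
  exact congrFun this n

lemma rec3_add (m n : ℕ) : rec3 u₀ u₁ (n + m) = rec3 (rec3 u₀ u₁ m) (rec3 u₀ u₁ (m + 1)) n := by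
  have := eq_rec3 (f := fun n => rec3 u₀ u₁ (n + m)) fun n => by
    simp only [Nat.add_right_comm n 2 m, Nat.add_right_comm n 1 m, rec3_add_two]
  simpa [Nat.add_comm 1 m] using congrFun this n

lemma rec3_periodic {p : ℕ} (h₀ : rec3 u₀ u₁ p = u₀) (h₁ : rec3 u₀ u₁ (p + 1) = u₁) :
    Function.Periodic (rec3 u₀ u₁) p := fun n => by
  rw [rec3_add, h₀, h₁]

lemma rec3_succ_sub (n : ℕ) :
    rec3 u₀ u₁ (n + 1) - rec3 u₀ u₁ n = rec3 (u₁ - u₀) (2 * u₁ - u₀) n := by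
  have := eq_rec3 (f := fun n => rec3 u₀ u₁ (n + 1) - rec3 u₀ u₁ n) fun n => by
    simp only [rec3_add_two]; ring
  rw [congrFun this n]
  congr 1
  simp only [zero_add, rec3_one, rec3_zero, rec3_add_two]
  ring

lemma rec3_add_two_mul_add (t n : ℕ) :
    rec3 u₀ u₁ (n + 2 * t) + rec3 u₀ u₁ n = rec3 2 3 t * rec3 u₀ u₁ (n + t) := by
  induction t using Nat.twoStepInduction generalizing n with
  | zero => simp only [mul_zero, add_zero, rec3_zero]; ring
  | one => simp only [rec3_one, rec3_add_two]; ring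
  | more t ih₀ ih₁ =>
    have h₀ := ih₀ (n + 2)
    have h₁ := ih₁ (n + 1)
    rw [show n + 2 + 2 * t = n + 2 * t + 2 by ring] at h₀
    rw [show n + 1 + 2 * (t + 1) = n + 2 * t + 2 + 1 by ring,
      show n + 1 + (t + 1) = n + 2 + t by ring] at h₁
    rw [show n + 2 * (t + 2) = n + 2 * t + 2 + 2 by ring, show n + (t + 2) = n + 2 + t by ring,
      rec3_add_two u₀ u₁ (n + 2 * t + 2), rec3_add_two (2 : R) 3 t]
    linear_combination 3 * h₁ - h₀ + rec3_add_two u₀ u₁ n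

lemma rec3_add_two_mul_mul {t : ℕ} (ht : rec3 (2 : R) 3 t = 0) (n j : ℕ) :
    rec3 u₀ u₁ (n + 2 * t * j) = (-1) ^ j * rec3 u₀ u₁ n := by
  induction j with
  | zero => simp
  | succ j ih =>
    have h := rec3_add_two_mul_add u₀ u₁ t (n + 2 * t * j)
    rw [ht, zero_mul] at h
    rw [mul_add, mul_one, ← add_assoc, pow_succ]
    linear_combination h - ih

end rec3

lemma rec3_monotone {R : Type*} [CommRing R] [LinearOrder R] [IsStrictOrderedRing R] {u₀ u₁ : R}
    (h₀ : 0 ≤ u₀) (h₀₁ : u₀ ≤ u₁) : Monotone (rec3 u₀ u₁) := by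
  have key : ∀ n, 0 ≤ rec3 u₀ u₁ n ∧ rec3 u₀ u₁ n ≤ rec3 u₀ u₁ (n + 1) := by
    intro n
    induction n with
    | zero => exact ⟨h₀, h₀₁⟩
    | succ n ih => exact ⟨ih.1.trans ih.2, by rw [rec3_add_two]; linarith [ih.1, ih.2]⟩
  exact monotone_nat_of_le_succ fun n => (key n).2

lemma rec3_two_three_zmod_four {t : ℕ} (ht : ¬ 3 ∣ t) : rec3 (2 : ZMod 4) 3 t = 3 := by
  rw [← (rec3_periodic (2 : ZMod 4) 3 (p := 3) (by decide) (by decide)).map_mod_nat]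
  have : t % 3 = 1 ∨ t % 3 = 2 := by omega
  rcases this with h | h <;> rw [h] <;> decide

lemma not_isSquare_neg_one_of_mod_four_eq_three {n : ℕ} (hn : n % 4 = 3) :
    ¬ IsSquare (-1 : ZMod n) := by
  have := ZMod.nonsquare_of_jacobiSym_eq_neg_one (a := -1) (b := n)
    (by rw [jacobiSym.at_neg_one (Nat.odd_iff.mpr (by omega)), ZMod.χ₄_nat_three_mod_four hn])
  simpa using this

lemma rec3_one_five_ne_sq_of_odd {n : ℕ} (hn : Odd n) (y : ℤ) : rec3 (1 : ℤ) 5 n ≠ y ^ 2 := by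
  intro h
  have h8 := congrArg (Int.castRingHom (ZMod 8)) h
  rw [map_rec3, map_pow, map_one, map_ofNat,
    ← (rec3_periodic (1 : ZMod 8) 5 (p := 6) (by decide) (by decide)).map_mod_nat] at h8
  have key : ∀ r : Fin 6, r.val % 2 = 1 → ∀ t : ZMod 8, rec3 1 5 r.val ≠ t ^ 2 := by decide
  have hodd : n % 6 % 2 = 1 := by have := Nat.odd_iff.mp hn; omega
  exact key ⟨n % 6, Nat.mod_lt _ (by norm_num)⟩ hodd _ h8

lemma rec3_two_seven_ne_sq (n : ℕ) (y : ℤ) : rec3 (2 : ℤ) 7 n ≠ y ^ 2 := by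
  intro h
  have h8 := congrArg (Int.castRingHom (ZMod 8)) h
  rw [map_rec3, map_pow, map_ofNat, map_ofNat,
    ← (rec3_periodic (2 : ZMod 8) 7 (p := 6) (by decide) (by decide)).map_mod_nat] at h8
  have key : ∀ r : Fin 6, ∀ t : ZMod 8, rec3 2 7 r.val ≠ t ^ 2 := by decide
  exact key ⟨n % 6, Nat.mod_lt _ (by norm_num)⟩ _ h8

-- `rec3 2 3 (2 ^ k)` divides `rec3 1 5 (2 ^ (k + 1) * m) + 1` for odd `m`.
lemma rec3_one_five_ne_sq_of_even {n : ℕ} (hn₀ : n ≠ 0) (hn : Even n) (y : ℤ) :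
    rec3 (1 : ℤ) 5 n ≠ y ^ 2 := by
  intro h
  obtain ⟨k, m, hm, rfl⟩ := Nat.exists_eq_two_pow_mul_odd hn₀
  obtain ⟨k, rfl⟩ : ∃ k', k = k' + 1 := Nat.exists_eq_succ_of_ne_zero <| by
    rintro rfl
    exact Nat.not_even_iff_odd.mpr (by simpa using hm) hn
  obtain ⟨W, hVW⟩ : ∃ W : ℕ, rec3 (2 : ℤ) 3 (2 ^ k) = W := Int.eq_ofNat_of_zero_le <|
    zero_le_two.trans (rec3_monotone (by norm_num) (by norm_num) (Nat.zero_le _))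
  have hW : W % 4 = 3 := by
    have h4 := map_rec3 (2 : ℤ) 3 (Int.castRingHom (ZMod 4)) (2 ^ k)
    rw [map_ofNat, map_ofNat, rec3_two_three_zmod_four fun h3 => by
      simpa using Nat.prime_three.dvd_of_dvd_pow h3, hVW] at h4
    simpa using (ZMod.natCast_eq_natCast_iff' W 3 4).mp (by simpa using h4)
  have hV : rec3 (2 : ZMod W) 3 (2 ^ k) = 0 := by
    have hW0 := map_rec3 (2 : ℤ) 3 (Int.castRingHom (ZMod W)) (2 ^ k)
    rwa [map_ofNat, map_ofNat, hVW, map_natCast, ZMod.natCast_self, eq_comm] at hW0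
  have hA := rec3_add_two_mul_mul (1 : ZMod W) 5 hV 0 m
  rw [zero_add, rec3_zero, mul_one, hm.neg_one_pow, ← pow_succ'] at hA
  have hy := congrArg (Int.castRingHom (ZMod W)) h
  rw [map_rec3, map_one, map_ofNat, hA, map_pow] at hy
  exact not_isSquare_neg_one_of_mod_four_eq_three hW ⟨_, hy.trans (sq _)⟩

lemma eq_zero_of_rec3_one_five_eq_sq {n : ℕ} {y : ℤ} (h : rec3 (1 : ℤ) 5 n = y ^ 2) : n = 0 := by
  by_contra hn₀
  rcases Nat.even_or_odd n with hn | hn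
  · exact rec3_one_five_ne_sq_of_even hn₀ hn y h
  · exact rec3_one_five_ne_sq_of_odd hn y h

lemma vieta_jump_of_four_le {a b : ℤ} (hb : 4 ≤ b) (hba : b ≤ a)
    (h : a ^ 2 - 3 * a * b + b ^ 2 = -11) : 1 ≤ 3 * b - a ∧ 3 * b - a < b := by
  constructor <;> nlinarith

lemma exists_rec3_of_form_eq_neg_eleven {a b : ℤ} (hb : 1 ≤ b) (hba : b ≤ a)
    (h : a ^ 2 - 3 * a * b + b ^ 2 = -11) :
    ∃ n, (a = rec3 3 4 (n + 1) ∧ b = rec3 3 4 n) ∨ (a = rec3 3 5 (n + 1) ∧ b = rec3 3 5 n) := by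
  induction hN : b.toNat using Nat.strong_induction_on generalizing a b with
  | _ N ih =>
  by_cases hb3 : b ≤ 3
  · interval_cases b
    · nlinarith [sq_nonneg (2 * a - 3)]
    · nlinarith [sq_nonneg (a - 3)]
    · have : (a - 4) * (a - 5) = 0 := by linear_combination h
      rcases mul_eq_zero.mp this with h4 | h5
      · exact ⟨0, .inl ⟨by simpa [sub_eq_zero] using h4, rfl⟩⟩
      · exact ⟨0, .inr ⟨by simpa [sub_eq_zero] using h5, rfl⟩⟩
  · obtain ⟨hc, hcb⟩ := vieta_jump_of_four_le (by omega) hba h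
    obtain ⟨n, ⟨h₁, h₂⟩ | ⟨h₁, h₂⟩⟩ :=
      ih (3 * b - a).toNat (by omega) hc hcb.le (by linear_combination h) rfl
    · exact ⟨n + 1, .inl ⟨by rw [rec3_add_two, ← h₁, ← h₂]; ring, h₁⟩⟩
    · exact ⟨n + 1, .inr ⟨by rw [rec3_add_two, ← h₁, ← h₂]; ring, h₁⟩⟩

lemma eq_four_three_of_sub_eq_sq {a b y : ℤ} (hb : 1 ≤ b) (hba : b ≤ a)
    (h : a ^ 2 - 3 * a * b + b ^ 2 = -11) (hy : a - b = y ^ 2) : a = 4 ∧ b = 3 := by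
  obtain ⟨n, ⟨ha, hb⟩ | ⟨ha, hb⟩⟩ := exists_rec3_of_form_eq_neg_eleven hb hba h
  · have hn : rec3 (1 : ℤ) 5 n = y ^ 2 := by rw [← hy, ha, hb, rec3_succ_sub]; norm_num
    obtain rfl := eq_zero_of_rec3_one_five_eq_sq hn
    exact ⟨ha, hb⟩
  · refine absurd ?_ (rec3_two_seven_ne_sq n y)
    rw [← hy, ha, hb, rec3_succ_sub]; norm_num

/-- The only integer solutions `(x, y)` of `y⁴ - 3xy² + x² = 11` are
`(x, y) ∈ {(-2, 1), (-2, -1), (5, 1), (5, -1)}`. -/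
theorem stmt_14 (x y : ℤ) :
    y ^ 4 - 3 * x * y ^ 2 + x ^ 2 = 11 ↔
      (x, y) ∈ ({(-2, 1), (-2, -1), (5, 1), (5, -1)} : Set (ℤ × ℤ)) := by
  simp only [Set.mem_insert_iff, Set.mem_singleton_iff, Prod.mk.injEq]
  refine ⟨fun h => ?_, by rintro (⟨rfl, rfl⟩ | ⟨rfl, rfl⟩ | ⟨rfl, rfl⟩ | ⟨rfl, rfl⟩) <;> norm_num⟩
  set a := x - y ^ 2
  set b := x - 2 * y ^ 2
  have hform : a ^ 2 - 3 * a * b + b ^ 2 = -11 := by linear_combination -h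
  have hab : a * b = y ^ 4 + 11 := by linear_combination h
  have hsub : a - b = y ^ 2 := by ring
  have hx : y ^ 2 = 1 ∧ (x = 5 ∨ x = -2) := by
    rcases le_or_gt 1 b with hb₁ | hb₀
    · obtain ⟨ha₄, hb₃⟩ := eq_four_three_of_sub_eq_sq hb₁ (by nlinarith [sq_nonneg y]) hform hsub
      exact ⟨by linarith, .inl (by linarith)⟩
    · have ha₁ : a ≤ -1 := by nlinarith [pow_nonneg (sq_nonneg y) 2]
      obtain ⟨hb₄, ha₃⟩ := eq_four_three_of_sub_eq_sq (a := -b) (b := -a) (y := y) (by linarith)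
        (by nlinarith [sq_nonneg y]) (by linear_combination hform) (by linear_combination hsub)
      exact ⟨by linarith, .inr (by linarith)⟩
  obtain ⟨hy, hx⟩ := hx
  rcases sq_eq_one_iff.mp hy with rfl | rfl <;> omega
end

section
/- The equation Y^2 − 3XY + X^2 = ±ℓ, for ℓ ∈ {7, 13, 29, 41, 43, 71, 83, 97}, has no integer solution (X, Y) in which both X and Y are perfect squares. -/
lemma no_mod (n : ℕ) [NeZero n] (x y k : ℤ)
    (hk : ∀ a b : ZMod n, (b ^ 2) ^ 2 - 3 * a ^ 2 * b ^ 2 + (a ^ 2) ^ 2 ≠ (k : ZMod n))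
    (h : (y ^ 2) ^ 2 - 3 * x ^ 2 * y ^ 2 + (x ^ 2) ^ 2 = k) : False := by
  apply hk (x : ZMod n) (y : ZMod n)
  have := congrArg (Int.cast : ℤ → ZMod n) h
  push_cast at this
  simpa only [Int.cast_pow] using this

lemma sub_case (x y c : ℤ) (h1 : x * y = c) (hc : c ^ 2 = 1225)
    (h2 : y ^ 2 - x ^ 2 = 36 ∨ y ^ 2 - x ^ 2 = -36) : False := by
  have hxy : (x * y) ^ 2 = 1225 := by rw [h1]; exact hc
  have hs : (x ^ 2 + y ^ 2) ^ 2 = 6196 := by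
    rcases h2 with h2 | h2
    · linear_combination (y ^ 2 - x ^ 2 + 36) * h2 + 4 * hxy
    · linear_combination (y ^ 2 - x ^ 2 - 36) * h2 + 4 * hxy
  have hnn : 0 ≤ x ^ 2 + y ^ 2 := by positivity
  have hcase : x ^ 2 + y ^ 2 ≤ 78 ∨ x ^ 2 + y ^ 2 ≥ 79 := by omega
  rcases hcase with h | h <;> nlinarith

lemma no71 (x y : ℤ) (h : (y ^ 2) ^ 2 - 3 * x ^ 2 * y ^ 2 + (x ^ 2) ^ 2 = 71) : False := by
  have hAB : (y ^ 2 + x * y - x ^ 2) * (y ^ 2 - x * y - x ^ 2) = 71 := by linear_combination h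
  have hAdvd : (y ^ 2 + x * y - x ^ 2).natAbs ∣ 71 :=
    Int.natAbs_dvd_natAbs.mpr ⟨_, hAB.symm⟩
  have h4 : y ^ 2 + x * y - x ^ 2 = 1 ∨ y ^ 2 + x * y - x ^ 2 = -1 ∨
      y ^ 2 + x * y - x ^ 2 = 71 ∨ y ^ 2 + x * y - x ^ 2 = -71 := by
    have := Nat.Prime.eq_one_or_self_of_dvd (by norm_num) _ hAdvd
    omega
  rcases h4 with h4 | h4 | h4 | h4
  · have hB : y ^ 2 - x * y - x ^ 2 = 71 := by
      linear_combination hAB - (y ^ 2 - x * y - x ^ 2) * h4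
    exact sub_case x y (-35) (by linarith) (by norm_num) (Or.inl (by linarith))
  · have hB : y ^ 2 - x * y - x ^ 2 = -71 := by
      linear_combination - hAB + (y ^ 2 - x * y - x ^ 2) * h4
    exact sub_case x y 35 (by linarith) (by norm_num) (Or.inr (by linarith))
  · have key : (71 : ℤ) * (y ^ 2 - x * y - x ^ 2) = 71 * 1 := by
      linear_combination hAB - (y ^ 2 - x * y - x ^ 2) * h4
    have hB := mul_left_cancel₀ (by norm_num : (71 : ℤ) ≠ 0) key
    exact sub_case x y 35 (by linarith) (by norm_num) (Or.inl (by linarith))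
  · have key : (-71 : ℤ) * (y ^ 2 - x * y - x ^ 2) = (-71) * (-1) := by
      linear_combination hAB - (y ^ 2 - x * y - x ^ 2) * h4
    have hB := mul_left_cancel₀ (by norm_num : (-71 : ℤ) ≠ 0) key
    exact sub_case x y (-35) (by linarith) (by norm_num) (Or.inr (by linarith))

/-- For `ℓ ∈ {7, 13, 29, 41, 43, 71, 83, 97}`, the Thue equation
`Y² - 3XY + X² = ±ℓ` has no integer solution `(X, Y)` in which both `X` and `Y`
are perfect squares. -/
theorem stmt_19 (ℓ : ℤ) (hℓ : ℓ ∈ ({7, 13, 29, 41, 43, 71, 83, 97} : Set ℤ))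
    (X Y : ℤ) (hX : ∃ x : ℤ, X = x ^ 2) (hY : ∃ y : ℤ, Y = y ^ 2) :
    Y ^ 2 - 3 * X * Y + X ^ 2 ≠ ℓ ∧ Y ^ 2 - 3 * X * Y + X ^ 2 ≠ -ℓ := by
  obtain ⟨x, rfl⟩ := hX
  obtain ⟨y, rfl⟩ := hY
  simp only [Set.mem_insert_iff, Set.mem_singleton_iff] at hℓ
  rcases hℓ with rfl | rfl | rfl | rfl | rfl | rfl | rfl | rfl
  · exact ⟨fun h => no_mod 5 x y 7 (by decide) h, fun h => no_mod 5 x y (-7) (by decide) h⟩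
  · exact ⟨fun h => no_mod 5 x y 13 (by decide) h, fun h => no_mod 5 x y (-13) (by decide) h⟩
  · exact ⟨fun h => no_mod 16 x y 29 (by decide) h, fun h => no_mod 16 x y (-29) (by decide) h⟩
  · exact ⟨fun h => no_mod 16 x y 41 (by decide) h, fun h => no_mod 13 x y (-41) (by decide) h⟩
  · exact ⟨fun h => no_mod 5 x y 43 (by decide) h, fun h => no_mod 5 x y (-43) (by decide) h⟩
  · exact ⟨fun h => no71 x y h, fun h => no_mod 16 x y (-71) (by decide) h⟩
  · exact ⟨fun h => no_mod 5 x y 83 (by decide) h, fun h => no_mod 5 x y (-83) (by decide) h⟩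
  · exact ⟨fun h => no_mod 5 x y 97 (by decide) h, fun h => no_mod 5 x y (-97) (by decide) h⟩
end
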